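/- There exist arbitrarily long strictly increasing aliquot sequences: for every k there exists n such that n < s(n) < s^2(n) < ... < s^k(n). -/

import Mathlib

/-- Sum of proper divisors: `s n = σ n - n`. -/
def s (n : ℕ) : ℕ := ArithmeticFunction.sigma 1 n - n

open ArithmeticFunction Finset
open scoped ArithmeticFunction.sigma

/-- Any positive multiple of 12 has σ at least 28/12 times itself. -/
lemma sigma_ge_of_twelve_dvd {m : ℕ} (hm : 0 < m) : 28 * m ≤ σ 1 (12 * m) := by
  rw [sigma_one_apply]
  have hsub : ({12*m, 6*m, 4*m, 3*m, 2*m, m} : Finset ℕ) ⊆ (12*m).divisors := by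
    intro d hd
    simp only [Finset.mem_insert, Finset.mem_singleton] at hd
    rw [Nat.mem_divisors]
    constructor
    · rcases hd with h|h|h|h|h|h <;> subst h
      · exact dvd_rfl
      · exact ⟨2, by ring⟩
      · exact ⟨3, by ring⟩
      · exact ⟨4, by ring⟩
      · exact ⟨6, by ring⟩
      · exact ⟨12, by ring⟩
    · positivity
  have hsum : ∑ d ∈ ({12*m, 6*m, 4*m, 3*m, 2*m, m} : Finset ℕ), d = 28 * m := by
    rw [Finset.sum_insert (by simp only [Finset.mem_insert, Finset.mem_singleton]; omega),
        Finset.sum_insert (by simp only [Finset.mem_insert, Finset.mem_singleton]; omega),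
        Finset.sum_insert (by simp only [Finset.mem_insert, Finset.mem_singleton]; omega),
        Finset.sum_insert (by simp only [Finset.mem_insert, Finset.mem_singleton]; omega),
        Finset.sum_insert (by simp only [Finset.mem_singleton]; omega),
        Finset.sum_singleton]
    ring
  calc 28 * m = ∑ d ∈ ({12*m, 6*m, 4*m, 3*m, 2*m, m} : Finset ℕ), d := hsum.symm
    _ ≤ ∑ d ∈ (12*m).divisors, d := Finset.sum_le_sum_of_subset hsub

lemma two_mul_lt_sigma {N : ℕ} (h12 : 12 ∣ N) (h0 : 0 < N) : 2 * N < σ 1 N := by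
  obtain ⟨m, rfl⟩ := h12
  have hm : 0 < m := by omega
  have := sigma_ge_of_twelve_dvd hm
  omega

/-- Every positive multiple of 12 is abundant. -/
lemma lt_s {N : ℕ} (h12 : 12 ∣ N) (h0 : 0 < N) : N < s N := by
  have := two_mul_lt_sigma h12 h0
  unfold s
  omega

/-- Key lemma: a residue class forcing `12 ∣ s^[i] N` for all `i < k`. -/
lemma key (k : ℕ) : ∃ M r : ℕ, 0 < M ∧ 12 ∣ M ∧ 12 ∣ r ∧
    ∀ N, 0 < N → N ≡ r [MOD M] → ∀ i < k, 12 ∣ s^[i] N := by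
  induction k with
  | zero => exact ⟨12, 0, by norm_num, dvd_rfl, dvd_zero 12,
      fun N _ _ i hi => absurd hi (by omega)⟩
  | succ k ih =>
    obtain ⟨M, r, hM0, hM12, hr12, hP⟩ := ih
    have hM1 : M ≠ 0 := by omega
    obtain ⟨q, hq, hqM, hq1⟩ := Nat.exists_prime_gt_modEq_one M hM1
    have hM12' : 12 ≤ M := Nat.le_of_dvd hM0 hM12
    -- target residue t with t + r ≡ 0 [MOD M] and 12 ∣ t
    set t := M - r % M with ht
    have hrm : r % M < M := Nat.mod_lt _ hM0
    have h12t : 12 ∣ t := Nat.dvd_sub hM12 ((Nat.dvd_mod_iff hM12).2 hr12)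
    have hMtr : M ∣ t + r := by
      have h1 := Nat.div_add_mod r M
      have : t + r = M + M * (r / M) := by omega
      rw [this]
      exact Nat.dvd_add dvd_rfl (Dvd.intro _ rfl)
    -- coprimality for CRT
    have hqndvd : ¬ q ∣ M := fun h => absurd (Nat.le_of_dvd hM0 h) (by omega)
    have hqcop : Nat.Coprime q M := (Nat.Prime.coprime_iff_not_dvd hq).2 hqndvd
    have hcop : Nat.Coprime (q ^ M) M := hqcop.pow_left M
    obtain ⟨x, hx1, hx2⟩ := Nat.chineseRemainder hcop (q ^ (M-1)) t
    refine ⟨q ^ M * M, x, ?_, ?_, ?_, ?_⟩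
    · exact Nat.mul_pos (Nat.pow_pos hq.pos) hM0
    · exact hM12.mul_left _
    · -- 12 ∣ x
      have : x ≡ t [MOD 12] := Nat.ModEq.of_dvd hM12 hx2
      have h0 : t ≡ 0 [MOD 12] := (Nat.modEq_zero_iff_dvd).2 h12t
      exact (Nat.modEq_zero_iff_dvd).1 (this.trans h0)
    · intro N hN0 hNx
      -- exact power of q dividing N
      have hq1' : 1 < q := hq.one_lt
      have hNq : N ≡ q ^ (M-1) [MOD q ^ M] :=
        (Nat.ModEq.of_dvd (dvd_mul_right _ _) hNx).trans hx1
      have hlt : q ^ (M-1) < q ^ M := Nat.pow_lt_pow_right hq1' (by omega)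
      have hmod : N % q ^ M = q ^ (M-1) := by
        have := hNq
        unfold Nat.ModEq at this
        rw [this, Nat.mod_eq_of_lt hlt]
      set c : ℕ := q * (N / q ^ M) + 1 with hc
      have hpow : q ^ M = q ^ (M-1) * q := by
        conv_lhs => rw [show M = (M-1) + 1 by omega]
        rw [pow_succ]
      have hdm' : q ^ M * (N / q ^ M) + q ^ (M-1) = N := by
        rw [← hmod]
        exact Nat.div_add_mod N (q ^ M)
      have hNfac : N = q ^ (M-1) * c := by
        rw [hc]
        calc N = q ^ M * (N / q ^ M) + q ^ (M-1) := hdm'.symm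
          _ = q ^ (M-1) * (q * (N / q ^ M) + 1) := by rw [hpow]; ring
      have hqc : ¬ q ∣ c := by
        intro h
        have h1 : q ∣ 1 := (Nat.dvd_add_right (Dvd.intro _ rfl)).1 h
        have := Nat.le_of_dvd one_pos h1
        omega
      have hcopc : Nat.Coprime (q ^ (M-1)) c :=
        ((Nat.Prime.coprime_iff_not_dvd hq).2 hqc).pow_left _
      -- M ∣ σ N
      have hσfac : σ 1 N = σ 1 (q ^ (M-1)) * σ 1 c := by
        rw [hNfac]
        exact isMultiplicative_sigma.map_mul_of_coprime hcopc
      have hMσq : M ∣ σ 1 (q ^ (M-1)) := by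
        rw [sigma_one_apply_prime_pow hq]
        rw [show M - 1 + 1 = M by omega]
        have : ((∑ i ∈ Finset.range M, q ^ i : ℕ) : ZMod M) = 0 := by
          push_cast
          have hq1'' : (q : ZMod M) = 1 := by
            have := (ZMod.natCast_eq_natCast_iff q 1 M).2 hq1
            simpa using this
          simp [hq1'']
        exact (ZMod.natCast_eq_zero_iff _ _).1 this
      have hMσ : M ∣ σ 1 N := hσfac ▸ hMσq.mul_right _
      -- 12 ∣ N
      have h12x : 12 ∣ x := by
        have : x ≡ t [MOD 12] := Nat.ModEq.of_dvd hM12 hx2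
        exact (Nat.modEq_zero_iff_dvd).1 (this.trans ((Nat.modEq_zero_iff_dvd).2 h12t))
      have h12N : 12 ∣ N := by
        have h1 : N ≡ x [MOD 12] := Nat.ModEq.of_dvd (hM12.mul_left _) hNx
        exact (Nat.modEq_zero_iff_dvd).1 (h1.trans ((Nat.modEq_zero_iff_dvd).2 h12x))
      -- abundance
      have hσ2 : 2 * N < σ 1 N := two_mul_lt_sigma h12N hN0
      have hsN : N < s N := lt_s h12N hN0
      have hsum : s N + N = σ 1 N := by unfold s; omega
      -- s N ≡ r [MOD M]
      have hNt : N ≡ t [MOD M] := (Nat.ModEq.of_dvd (dvd_mul_left _ _) hNx).trans hx2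
      have hstep : s N ≡ r [MOD M] := by
        have h1 : s N + N ≡ 0 [MOD M] := (Nat.modEq_zero_iff_dvd).2 (hsum ▸ hMσ)
        have h2 : (0:ℕ) ≡ t + r [MOD M] := ((Nat.modEq_zero_iff_dvd).2 hMtr).symm
        have h3 : t + r ≡ N + r [MOD M] := Nat.ModEq.add_right r hNt.symm
        have h4 : s N + N ≡ N + r [MOD M] := (h1.trans h2).trans h3
        have h5 : s N + N ≡ r + N [MOD M] := by rwa [Nat.add_comm N r] at h4
        exact Nat.ModEq.add_right_cancel' N h5
      have hIH := hP (s N) (by omega) hstep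
      intro i hi
      match i with
      | 0 => exact h12N
      | (j+1) =>
        rw [Function.iterate_succ_apply]
        exact hIH j (by omega)

theorem arbitrarily_long_increasing_aliquot :
    ∀ k : ℕ, ∃ n : ℕ, 1 < n ∧ ∀ i < k, s^[i] n < s^[i + 1] n := by
  intro k
  obtain ⟨M, r, hM0, hM12, hr12, hP⟩ := key k
  set n := r + M with hn
  have h12n : 12 ∣ n := Nat.dvd_add hr12 hM12
  have hn0 : 0 < n := by omega
  have hmod : n ≡ r [MOD M] := by
    show (r + M) % M = r % M
    exact Nat.add_mod_right r M
  have hdvd := hP n hn0 hmod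
  have hpos : ∀ i, i ≤ k → 0 < s^[i] n := by
    intro i
    induction i with
    | zero => intro _; simpa using hn0
    | succ j ihj =>
      intro hjk
      have hj := ihj (by omega)
      have h12 := hdvd j (by omega)
      rw [Function.iterate_succ_apply']
      have := lt_s h12 hj
      omega
  refine ⟨n, ?_, ?_⟩
  · have : 12 ≤ n := Nat.le_of_dvd hn0 h12n
    omega
  · intro i hi
    rw [Function.iterate_succ_apply']
    exact lt_s (hdvd i hi) (hpos i (by omega))
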